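/- arXiv:2604.20589 — 3 statements merged into one kernel-verified Lean document; each statement's English description precedes it below -/
import Mathlib

section
/- Fix α ∈ (0,1) and ε ∈ (0,1) with ε ≤ 8^{−8/α²}. For every sufficiently large d (in terms of α) and every integer s with d² ≤ s ≤ 2^d, the probability that there exist at least s vertices v of Q^d such that either v has at least αd neighbours (in Q^d) lying in V_ε, or v is incident to at least αd edges of E_ε, is at most 2^{−s}. -/
open MeasureTheory

noncomputable section

abbrev Vtx (d : ℕ) := Fin d → ZMod 2

/-- The hypercube graph `Q^d` on vertex set `{0,1}^d`. -/
def cubeGraph (d : ℕ) : SimpleGraph (Vtx d) where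
  Adj u v := hammingDist u v = 1
  symm := by
    constructor
    intro u v h
    rwa [hammingDist_comm]
  loopless := by
    constructor
    intro u h
    simp [hammingDist_self] at h

/-- The graph `Q^d(k)`: vertices at Hamming distance exactly `k` are adjacent. -/
def distGraph (d k : ℕ) : SimpleGraph (Vtx d) where
  Adj u v := u ≠ v ∧ hammingDist u v = k
  symm := by
    constructor
    intro u v h
    exact ⟨h.1.symm, by rw [hammingDist_comm]; exact h.2⟩
  loopless := by
    constructor
    intro u h
    exact h.1 rfl

/-- Embedding of `{0,1}^d` into `ℝ^d`. -/
def toR {d : ℕ} (v : Vtx d) : Fin d → ℝ := fun i => ((v i).val : ℝ)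

/-- The set of retained vertices of a percolation configuration. -/
def retained {d : ℕ} (ω : Vtx d → Bool) : Set (Vtx d) := {v | ω v = true}

/-- `u v` is an edge of the polytope `conv S`. -/
def IsPolytopeEdge {d : ℕ} (S : Set (Vtx d)) (u v : Vtx d) : Prop :=
  u ∈ S ∧ v ∈ S ∧ u ≠ v ∧ ∃ (f : (Fin d → ℝ) →ₗ[ℝ] ℝ) (c : ℝ),
    f (toR u) = c ∧ f (toR v) = c ∧ ∀ z ∈ S, z ≠ u → z ≠ v → c < f (toR z)

/-- The graph of the polytope `conv S`. -/
def polytopeGraph {d : ℕ} (S : Set (Vtx d)) : SimpleGraph (Vtx d) where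
  Adj u v := IsPolytopeEdge S u v
  symm := by
    constructor
    rintro u v ⟨hu, hv, hne, f, c, h1, h2, h3⟩
    exact ⟨hv, hu, hne.symm, f, c, h2, h1, fun z hz z1 z2 => h3 z hz z2 z1⟩
  loopless := by
    constructor
    rintro u ⟨-, -, hne, -⟩
    exact hne rfl

/-- Degree of a vertex in a graph. -/
def deg {V : Type*} (G : SimpleGraph V) (v : V) : ℕ := {u | G.Adj v u}.ncard

/-- External neighbourhood of a set in a graph. -/
def extNbhd {V : Type*} (G : SimpleGraph V) (S : Set V) : Set V :=
  {v | v ∉ S ∧ ∃ u ∈ S, G.Adj u v}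

/-- Number of edges with exactly one endpoint in `S`. -/
def edgeBoundary {V : Type*} (G : SimpleGraph V) (S : Set V) : ℕ :=
  {p : V × V | p.1 ∈ S ∧ p.2 ∉ S ∧ G.Adj p.1 p.2}.ncard

/-- Bernoulli measure on `Bool`. -/
def bern (p : ℝ) : Measure Bool :=
  ENNReal.ofReal p • Measure.dirac true + ENNReal.ofReal (1 - p) • Measure.dirac false

instance bern_finite (p : ℝ) : IsFiniteMeasure (bern p) := by
  constructor
  simp only [bern, Measure.coe_add, Pi.add_apply, Measure.smul_apply, smul_eq_mul]
  exact ENNReal.add_lt_top.2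
    ⟨ENNReal.mul_lt_top ENNReal.ofReal_lt_top (measure_lt_top _ _),
     ENNReal.mul_lt_top ENNReal.ofReal_lt_top (measure_lt_top _ _)⟩

/-- Product Bernoulli measure: each vertex of `{0,1}^d` retained independently w.p. `p`. -/
def vertexMeasure (d : ℕ) (p : ℝ) : Measure (Vtx d → Bool) :=
  Measure.pi fun _ => bern p

/-- Product Bernoulli measure on edge configurations. -/
def edgeMeasure (d : ℕ) (q : ℝ) : Measure (Sym2 (Vtx d) → Bool) :=
  Measure.pi fun _ => bern q

/-- Joint law of independent vertex- and edge-percolation configurations. -/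
def mixedMeasure (d : ℕ) (p q : ℝ) :
    Measure ((Vtx d → Bool) × (Sym2 (Vtx d) → Bool)) :=
  (vertexMeasure d p).prod (edgeMeasure d q)

/-- The induced subgraph `Q^d_p` of the hypercube given a vertex configuration. -/
def inducedGraph (d : ℕ) (f : Vtx d → Bool) : SimpleGraph (Vtx d) where
  Adj u v := (cubeGraph d).Adj u v ∧ f u = true ∧ f v = true
  symm := by
    constructor
    rintro u v ⟨h, hu, hv⟩
    exact ⟨(cubeGraph d).symm.symm _ _ h, hv, hu⟩
  loopless := ⟨fun u h => (cubeGraph d).loopless.irrefl u h.1⟩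

/-- The mixed percolation `Q^d_{p,q}` given vertex and edge configurations. -/
def mixedGraph (d : ℕ) (f : Vtx d → Bool) (g : Sym2 (Vtx d) → Bool) :
    SimpleGraph (Vtx d) where
  Adj u v := (cubeGraph d).Adj u v ∧ f u = true ∧ f v = true ∧ g s(u, v) = true
  symm := by
    constructor
    rintro u v ⟨h, hu, hv, he⟩
    refine ⟨(cubeGraph d).symm.symm _ _ h, hv, hu, ?_⟩
    rwa [Sym2.eq_swap]
  loopless := ⟨fun u h => (cubeGraph d).loopless.irrefl u h.1⟩

/-- The subgraph of `Q^d` with vertex set `U` and edges of `F` inside `U`. -/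
def setGraph (d : ℕ) (U : Set (Vtx d)) (F : Set (Sym2 (Vtx d))) :
    SimpleGraph (Vtx d) where
  Adj u v := (cubeGraph d).Adj u v ∧ u ∈ U ∧ v ∈ U ∧ s(u, v) ∈ F
  symm := by
    constructor
    rintro u v ⟨h, hu, hv, he⟩
    refine ⟨(cubeGraph d).symm.symm _ _ h, hv, hu, ?_⟩
    rwa [Sym2.eq_swap]
  loopless := ⟨fun u h => (cubeGraph d).loopless.irrefl u h.1⟩

/-- Indicator vector `1_e ∈ F_2^d` of a set of coordinates. -/
def indic {d : ℕ} (e : Finset (Fin d)) : Vtx d := fun i => if i ∈ e then 1 else 0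

/-- The family `D_{k,m}` of sets of `m` pairwise disjoint `k`-subsets of `[d]`. -/
def Dfam (d k m : ℕ) : Set (Finset (Finset (Fin d))) :=
  {D | D.card = m ∧ (∀ e ∈ D, e.card = k) ∧
    ∀ e ∈ D, ∀ f ∈ D, e ≠ f → Disjoint e f}

/-- Vertex set of the cube `Q(D,v)`. -/
def QV {d : ℕ} (D : Finset (Finset (Fin d))) (v : Vtx d) : Set (Vtx d) :=
  {u | ∃ I : Finset (Finset (Fin d)), I ⊆ D ∧ u = v + ∑ e ∈ I, indic e}

/-- Adjacency in the cube `Q(D,v)`. -/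
def QAdj {d : ℕ} (D : Finset (Finset (Fin d))) (v : Vtx d) (u w : Vtx d) : Prop :=
  u ∈ QV D v ∧ w ∈ QV D v ∧ ∃ e ∈ D, u + w = indic e

/-- The cube `Q(D,v)` as a simple graph on the ambient vertex set. -/
def Qgraph {d : ℕ} (D : Finset (Finset (Fin d))) (v₀ : Vtx d) : SimpleGraph (Vtx d) where
  Adj u w := u ≠ w ∧ QAdj D v₀ u w
  symm := by
    constructor
    rintro u w ⟨hne, h1, h2, e, he, hs⟩
    exact ⟨hne.symm, h2, h1, e, he, by rwa [add_comm]⟩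
  loopless := ⟨fun u h => h.1 rfl⟩

/-- Edge set of the cube `Q(D,v)` as a set of unordered pairs. -/
def Qedges {d : ℕ} (D : Finset (Finset (Fin d))) (v : Vtx d) : Set (Sym2 (Vtx d)) :=
  {e | ∃ u w : Vtx d, e = s(u, w) ∧ u ≠ w ∧ QAdj D v u w}

/-- The family `Q_{k,m}` of cubes `Q(D,v)`, represented as (vertex set, edge set) pairs. -/
def CubeFam (d k m : ℕ) : Set (Set (Vtx d) × Set (Sym2 (Vtx d))) :=
  {H | ∃ D ∈ Dfam d k m, ∃ v : Vtx d, H.1 = QV D v ∧ H.2 = Qedges D v}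

/-- The auxiliary graph `G_□` on `Q_{k,m}`. -/
def Gsquare (d k m : ℕ) : SimpleGraph (CubeFam d k m) where
  Adj H H' := H ≠ H' ∧ (H.1.1 ∩ H'.1.1).ncard = 2 ^ (m - 1)
  symm := by
    constructor
    rintro H H' ⟨hne, h⟩
    exact ⟨hne.symm, by rwa [Set.inter_comm]⟩
  loopless := ⟨fun H h => h.1 rfl⟩

/-- The natural embedding of `Q^m` onto the cube `Q(D,v₀)` with directions `E 0, …, E (m-1)`. -/
def cubeEmb {d : ℕ} (m : ℕ) (E : Fin m → Finset (Fin d)) (v₀ : Vtx d) (y : Vtx m) : Vtx d :=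
  v₀ + ∑ i, y i • indic (E i)

instance setPairMS (X Y : Type*) : MeasurableSpace (Set X × Set Y) := ⊤

/-- The (vertex set, edge set) pair of the graph `H_p[P_k]` transported to `Q^m`. -/
def polyMap {d : ℕ} (m k : ℕ) (E : Fin m → Finset (Fin d)) (v₀ : Vtx d)
    (ω : Vtx d → Bool) : Set (Vtx m) × Set (Sym2 (Vtx m)) :=
  ({y | ω (cubeEmb m E v₀ y) = true},
   {e | ∃ y z : Vtx m, e = s(y, z) ∧ (cubeGraph m).Adj y z ∧
      IsPolytopeEdge (retained ω) (cubeEmb m E v₀ y) (cubeEmb m E v₀ z) ∧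
      hammingDist (cubeEmb m E v₀ y) (cubeEmb m E v₀ z) = k})

/-- The (vertex set, edge set) pair of the mixed percolation `Q^m_{p,q}`. -/
def mixMap (m : ℕ) (ω : (Vtx m → Bool) × (Sym2 (Vtx m) → Bool)) :
    Set (Vtx m) × Set (Sym2 (Vtx m)) :=
  ({y | ω.1 y = true}, (mixedGraph m ω.1 ω.2).edgeSet)

/-- The smallest subcube `Q^d[x,y]` of `Q^d` containing `x` and `y`. -/
def subcube {d : ℕ} (x y : Vtx d) : Set (Vtx d) := {z | ∀ i, x i = y i → z i = x i}

/-- `U` has the `α`-star property: pairwise vertex-disjoint stars centred at the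
elements of `U`, each with at least `(1 - α/2)d` leaves. -/
def HasStarProperty {d : ℕ} (α : ℝ) (U : Set (Vtx d)) : Prop :=
  ∃ L : Vtx d → Set (Vtx d),
    (∀ u ∈ U, (∀ w ∈ L u, (cubeGraph d).Adj u w) ∧ ((1 - α / 2) * d ≤ ((L u).ncard : ℝ))) ∧
    (∀ u ∈ U, ∀ u' ∈ U, u ≠ u' → Disjoint (insert u (L u)) (insert u' (L u')))

end


-- ===================== auxiliary material =====================

noncomputable section FDVAux

open MeasureTheory Finset

namespace FDV

/-! ### Bernoulli / product measure computations -/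

lemma bern_true (p : ℝ) : bern p {true} = ENNReal.ofReal p := by
  simp [bern, Measure.dirac_apply' _ (by trivial : MeasurableSet ({true} : Set Bool))]

lemma bern_univ (p : ℝ) (h0 : 0 ≤ p) (h1 : p ≤ 1) : bern p Set.univ = 1 := by
  simp [bern, ← ENNReal.ofReal_add h0 (by linarith : (0:ℝ) ≤ 1 - p)]

lemma pi_all_true {ι : Type*} [Fintype ι] [DecidableEq ι] (p : ℝ) (h0 : 0 ≤ p) (h1 : p ≤ 1)
    (A : Finset ι) :
    Measure.pi (fun _ : ι => bern p) {f : ι → Bool | ∀ a ∈ A, f a = true}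
      = ENNReal.ofReal p ^ A.card := by
  have hset : {f : ι → Bool | ∀ a ∈ A, f a = true}
      = Set.pi Set.univ (fun i => if i ∈ A then {true} else Set.univ) := by
    ext f
    simp only [Set.mem_setOf_eq, Set.mem_pi, Set.mem_univ, forall_true_left]
    constructor
    · intro h i
      by_cases hi : i ∈ A <;> simp [hi, h]
    · intro h a ha
      have := h a
      simpa [ha] using this
  rw [hset, Measure.pi_pi]
  simp only [apply_ite (bern p), bern_true, bern_univ p h0 h1]
  rw [Finset.prod_ite_mem Finset.univ A (fun _ => ENNReal.ofReal p)]
  simp [Finset.univ_inter, Finset.prod_const]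

lemma mixed_all_true (d : ℕ) (p : ℝ) (h0 : 0 ≤ p) (h1 : p ≤ 1)
    (A : Finset (Vtx d)) (B : Finset (Sym2 (Vtx d))) :
    mixedMeasure d p p {ω : (Vtx d → Bool) × (Sym2 (Vtx d) → Bool) |
        (∀ a ∈ A, ω.1 a = true) ∧ ∀ b ∈ B, ω.2 b = true}
      = ENNReal.ofReal p ^ (A.card + B.card) := by
  classical
  have hset : {ω : (Vtx d → Bool) × (Sym2 (Vtx d) → Bool) |
        (∀ a ∈ A, ω.1 a = true) ∧ ∀ b ∈ B, ω.2 b = true}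
      = {f : Vtx d → Bool | ∀ a ∈ A, f a = true} ×ˢ
        {g : Sym2 (Vtx d) → Bool | ∀ b ∈ B, g b = true} := by
    ext ω; simp [Set.mem_prod]
  haveI : IsFiniteMeasure (edgeMeasure d p) := by
    constructor
    rw [edgeMeasure, Measure.pi_univ]
    exact ENNReal.prod_lt_top fun i _ => measure_lt_top _ _
  rw [hset, mixedMeasure, Measure.prod_prod, vertexMeasure, edgeMeasure,
    pi_all_true p h0 h1, pi_all_true p h0 h1, pow_add]

/-! ### Hypercube combinatorics -/

lemma zmod2_ne {a b : ZMod 2} (h : a ≠ b) : b = a + 1 := by revert h; revert a b; decide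

variable {d : ℕ}

/-- some coordinate where `u` and `v` differ. -/
def dcoord (u v : Vtx d) : Option (Fin d) :=
  if h : ∃ i, u i ≠ v i then some h.choose else none

lemma ham1_unique {u v : Vtx d} (h : hammingDist u v = 1) :
    ∃ i, u i ≠ v i ∧ ∀ j, u j ≠ v j → j = i := by
  have h' : ({i | u i ≠ v i} : Finset (Fin d)).card = 1 := h
  obtain ⟨i, hi⟩ := Finset.card_eq_one.mp h'
  refine ⟨i, ?_, ?_⟩
  · have : i ∈ ({i | u i ≠ v i} : Finset (Fin d)) := hi ▸ Finset.mem_singleton_self i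
    simpa using this
  · intro j hj
    have : j ∈ ({i | u i ≠ v i} : Finset (Fin d)) := by simpa using hj
    rw [hi] at this
    simpa using this

lemma dcoord_inj {u v v' : Vtx d} (h : hammingDist u v = 1) (h' : hammingDist u v' = 1)
    (he : dcoord u v = dcoord u v') : v = v' := by
  obtain ⟨i, hi, hiu⟩ := ham1_unique h
  obtain ⟨i', hi', hiu'⟩ := ham1_unique h'
  have hex : ∃ j, u j ≠ v j := ⟨i, hi⟩
  have hex' : ∃ j, u j ≠ v' j := ⟨i', hi'⟩
  rw [dcoord, dcoord, dif_pos hex, dif_pos hex'] at he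
  have h1 : hex.choose = i := hiu _ hex.choose_spec
  have h2 : hex'.choose = i' := hiu' _ hex'.choose_spec
  have hii : i = i' := by
    have := Option.some_injective _ he
    rw [h1, h2] at this; exact this
  funext j
  by_cases hj : j = i
  · subst hj
    have e1 : v j = u j + 1 := zmod2_ne hi
    have e2 : v' j = u j + 1 := zmod2_ne (hii ▸ hi')
    rw [e1, e2]
  · have e1 : u j = v j := by_contra fun hc => hj (hiu j hc)
    have e2 : u j = v' j := by_contra fun hc => hj (hii ▸ hiu' j hc)
    rw [← e1, ← e2]

/-- neighbours of `v` in the hypercube. -/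
def nbrF (v : Vtx d) : Finset (Vtx d) := {u | hammingDist v u = 1}

lemma mem_nbrF {v u : Vtx d} : u ∈ nbrF v ↔ hammingDist v u = 1 := by
  simp [nbrF]

abbrev Elm (d : ℕ) := Vtx d ⊕ Sym2 (Vtx d)

/-- elements (neighbour-vertices and incident edges) attached to `v`. -/
def incX (v : Vtx d) : Finset (Elm d) :=
  (nbrF v).image Sum.inl ∪ (nbrF v).image (fun u => Sum.inr s(v, u))

def otherV (v : Vtx d) (e : Sym2 (Vtx d)) : Vtx d :=
  if h : v ∈ e then Sym2.Mem.other' h else v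

lemma otherV_spec {v : Vtx d} {e : Sym2 (Vtx d)} (h : v ∈ e) : s(v, otherV v e) = e := by
  rw [otherV, dif_pos h]; exact Sym2.other_spec' h

def Phi (v : Vtx d) : Elm d → (Option (Fin d)) ⊕ (Option (Fin d)) :=
  Sum.map (dcoord v) (fun e => dcoord v (otherV v e))

lemma Phi_injOn (v : Vtx d) : Set.InjOn (Phi v) ↑(incX v) := by
  intro x hx y hy hxy
  simp only [Finset.coe_union, Set.mem_union, Finset.coe_image, Set.mem_image,
    Finset.mem_coe, incX] at hx hy
  rcases hx with ⟨a, ha, rfl⟩ | ⟨a, ha, rfl⟩ <;> rcases hy with ⟨b, hb, rfl⟩ | ⟨b, hb, rfl⟩ <;>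
    simp only [Phi, Sum.map_inl, Sum.map_inr, Sum.inl.injEq, Sum.inr.injEq] at hxy ⊢
  · exact dcoord_inj (mem_nbrF.mp ha) (mem_nbrF.mp hb) hxy
  · cases hxy
  · cases hxy
  · have hva : v ∈ s(v, a) := Sym2.mem_mk_left _ _
    have hvb : v ∈ s(v, b) := Sym2.mem_mk_left _ _
    have ha' : s(v, otherV v s(v, a)) = s(v, a) := otherV_spec hva
    have hb' : s(v, otherV v s(v, b)) = s(v, b) := otherV_spec hvb
    have haa : otherV v s(v, a) = a := Sym2.congr_right.mp ha'
    have hbb : otherV v s(v, b) = b := Sym2.congr_right.mp hb'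
    rw [haa, hbb] at hxy
    rw [dcoord_inj (mem_nbrF.mp ha) (mem_nbrF.mp hb) hxy]

lemma incid_le (x : Elm d) :
    ({v | x ∈ incX v} : Finset (Vtx d)).card ≤ d + 1 := by
  cases x with
  | inl u =>
    have hsub : ∀ v ∈ ({v | Sum.inl u ∈ incX v} : Finset (Vtx d)), hammingDist v u = 1 := by
      intro v hv
      simp only [Finset.mem_filter] at hv
      have := hv.2
      simp only [incX, Finset.mem_union, Finset.mem_image] at this
      rcases this with ⟨a, ha, hae⟩ | ⟨a, ha, hae⟩
      · cases hae; exact mem_nbrF.mp ha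
      · cases hae
    calc ({v | Sum.inl u ∈ incX v} : Finset (Vtx d)).card
        ≤ (Finset.univ : Finset (Option (Fin d))).card := by
          apply Finset.card_le_card_of_injOn (fun v => dcoord u v)
            (fun _ _ => Finset.mem_univ _)
          intro v hv v' hv' he
          have h1 := hsub v (by simpa using hv)
          have h2 := hsub v' (by simpa using hv')
          rw [hammingDist_comm] at h1 h2
          exact dcoord_inj h1 h2 he
      _ = d + 1 := by simp
  | inr e =>
    induction e using Sym2.inductionOn with
    | hf a b =>
      have hsub : ({v | Sum.inr s(a,b) ∈ incX v} : Finset (Vtx d)) ⊆ {a, b} := by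
        intro v hv
        simp only [Finset.mem_filter] at hv
        have := hv.2
        simp only [incX, Finset.mem_union, Finset.mem_image] at this
        rcases this with ⟨c, hc, hce⟩ | ⟨c, hc, hce⟩
        · cases hce
        · have hvm : v ∈ s(a, b) := by
            have hsc : s(v, c) = s(a, b) := Sum.inr.inj hce
            rw [← hsc]; exact Sym2.mem_mk_left _ _
          rw [Sym2.mem_iff] at hvm
          simp [Finset.mem_insert, hvm]
      by_cases hd : 1 ≤ d
      · calc _ ≤ ({a, b} : Finset (Vtx d)).card := Finset.card_le_card hsub
          _ ≤ 2 := Finset.card_le_two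
          _ ≤ d + 1 := by omega
      · have hd0 : d = 0 := by omega
        have : ({v | Sum.inr s(a,b) ∈ incX v} : Finset (Vtx d)) = ∅ := by
          rw [Finset.eq_empty_iff_forall_notMem]
          intro v hv
          simp only [Finset.mem_filter] at hv
          have := hv.2
          simp only [incX, Finset.mem_union, Finset.mem_image] at this
          rcases this with ⟨c, hc, hce⟩ | ⟨c, hc, hce⟩ <;>
          · have h1 := mem_nbrF.mp hc
            have h2 : hammingDist v c ≤ Fintype.card (Fin d) := hammingDist_le_card_fintype
            rw [h1] at h2
            simp [hd0] at h2
        rw [this]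
        simp

/-! ### Certificates and their count -/

lemma image_eq_of_injOn {α β : Type*} [DecidableEq α] [DecidableEq β] {f : α → β}
    {s F F' : Finset α} (hinj : Set.InjOn f ↑s) (hF : F ⊆ s) (hF' : F' ⊆ s)
    (h : F.image f = F'.image f) : F = F' := by
  ext a
  constructor
  · intro ha
    have : f a ∈ F'.image f := h ▸ Finset.mem_image_of_mem f ha
    obtain ⟨b, hb, hba⟩ := Finset.mem_image.mp this
    rwa [← hinj (hF' hb) (hF ha) hba]
  · intro ha
    have : f a ∈ F.image f := h ▸ Finset.mem_image_of_mem f ha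
    obtain ⟨b, hb, hba⟩ := Finset.mem_image.mp this
    rwa [← hinj (hF hb) (hF' ha) hba]

def CertOne (d : ℕ) : Type := {p : Vtx d × Finset (Elm d) // p.2 ⊆ incX p.1}

instance : Fintype (CertOne d) := Subtype.fintype _
instance : DecidableEq (CertOne d) := Subtype.instDecidableEq

lemma certOne_card : Fintype.card (CertOne d) ≤ 2 ^ d * 2 ^ (2 * d + 2) := by
  have hinj : Function.Injective
      (fun c : CertOne d => (c.1.1, c.1.2.image (Phi c.1.1))) := by
    rintro ⟨⟨v, F⟩, h⟩ ⟨⟨v', F'⟩, h'⟩ heq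
    simp only [Prod.mk.injEq] at heq
    obtain ⟨rfl, himg⟩ := heq
    have : F = F' := image_eq_of_injOn (Phi_injOn v) h h' himg
    subst this; rfl
  calc Fintype.card (CertOne d)
      ≤ Fintype.card (Vtx d × Finset (Option (Fin d) ⊕ Option (Fin d))) :=
        Fintype.card_le_of_injective _ hinj
    _ = 2 ^ d * 2 ^ (2 * d + 2) := by
        rw [Fintype.card_prod, Fintype.card_finset]
        congr 1
        · rw [Fintype.card_fun]
          simp
        · congr 1
          rw [Fintype.card_sum, Fintype.card_option, Fintype.card_fin]
          omega

/-! ### List unions -/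

def unionList {E : Type*} [DecidableEq E] (Ls : List (Finset E)) : Finset E :=
  Ls.foldr (· ∪ ·) ∅

@[simp] lemma unionList_nil {E : Type*} [DecidableEq E] :
    unionList ([] : List (Finset E)) = ∅ := rfl

@[simp] lemma unionList_cons {E : Type*} [DecidableEq E] (F : Finset E) (Ls : List (Finset E)) :
    unionList (F :: Ls) = F ∪ unionList Ls := rfl

lemma mem_unionList {E : Type*} [DecidableEq E] {x : E} {Ls : List (Finset E)} :
    x ∈ unionList Ls ↔ ∃ F ∈ Ls, x ∈ F := by
  induction Ls with
  | nil => simp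
  | cons F Ls ih => simp [ih]

lemma disjoint_unionList {E : Type*} [DecidableEq E] {G : Finset E} {Ls : List (Finset E)}
    (h : ∀ F ∈ Ls, Disjoint G F) : Disjoint G (unionList Ls) := by
  induction Ls with
  | nil => simp
  | cons F Ls ih =>
    rw [unionList_cons, Finset.disjoint_union_right]
    exact ⟨h F (List.mem_cons_self), ih fun F' hF' => h F' (List.mem_cons_of_mem _ hF')⟩

lemma card_unionList {E : Type*} [DecidableEq E] {Ls : List (Finset E)}
    (h : Ls.Pairwise Disjoint) : (unionList Ls).card = (Ls.map Finset.card).sum := by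
  induction Ls with
  | nil => simp
  | cons F Ls ih =>
    rw [List.pairwise_cons] at h
    rw [unionList_cons, Finset.card_union_of_disjoint (disjoint_unionList h.1), List.map_cons,
      List.sum_cons, ih h.2]

/-! ### Greedy extraction -/

lemma greedy {V E : Type*} [DecidableEq V] [DecidableEq E] (W : V → Finset E) (r : ℕ) :
    ∀ (S : Finset V) (U : Finset E),
    ∃ L : List (V × Finset E),
      (∀ p ∈ L, p.1 ∈ S ∧ p.2 ⊆ W p.1 \ U ∧ p.2.card = r) ∧
      L.Pairwise (fun p q => Disjoint p.2 q.2) ∧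
      L.length ≤ S.card ∧
      ∀ v ∈ S, (∃ p ∈ L, p.1 = v) ∨
        ((W v) \ (U ∪ unionList (L.map Prod.snd))).card < r := by
  intro S
  induction S using Finset.strongInduction with
  | _ S ih =>
    intro U
    by_cases hex : ∃ v₀ ∈ S, r ≤ ((W v₀) \ U).card
    · obtain ⟨v₀, hv₀S, hv₀⟩ := hex
      obtain ⟨F₀, hF₀sub, hF₀card⟩ := Finset.exists_subset_card_eq hv₀
      obtain ⟨L, hmem, hpair, hlen, hleft⟩ :=
        ih (S.erase v₀) (Finset.erase_ssubset hv₀S) (U ∪ F₀)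
      refine ⟨(v₀, F₀) :: L, ?_, ?_, ?_, ?_⟩
      · rintro p hp
        rcases List.mem_cons.mp hp with rfl | hp
        · exact ⟨hv₀S, hF₀sub, hF₀card⟩
        · obtain ⟨h1, h2, h3⟩ := hmem p hp
          refine ⟨Finset.mem_of_mem_erase h1, ?_, h3⟩
          refine h2.trans ?_
          exact Finset.sdiff_subset_sdiff le_rfl Finset.subset_union_left
      · rw [List.pairwise_cons]
        refine ⟨?_, hpair⟩
        intro p hp
        have h2 := (hmem p hp).2.1
        have hd1 : Disjoint (W p.1 \ (U ∪ F₀)) F₀ :=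
          Finset.sdiff_disjoint.mono_right Finset.subset_union_right
        exact (hd1.symm).mono_right h2
      · simp only [List.length_cons]
        have hc1 : 1 ≤ S.card := Finset.card_pos.mpr ⟨v₀, hv₀S⟩
        have := Finset.card_erase_of_mem hv₀S
        omega
      · intro v hv
        by_cases hvv : v = v₀
        · exact Or.inl ⟨(v₀, F₀), List.mem_cons_self, hvv.symm⟩
        · rcases hleft v (Finset.mem_erase.mpr ⟨hvv, hv⟩) with ⟨p, hp, hpv⟩ | hcard
          · exact Or.inl ⟨p, List.mem_cons_of_mem _ hp, hpv⟩
          · right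
            rw [List.map_cons, unionList_cons]
            have heq : U ∪ (F₀ ∪ unionList (L.map Prod.snd))
                = (U ∪ F₀) ∪ unionList (L.map Prod.snd) := by
              rw [Finset.union_assoc]
            rw [heq]
            exact hcard
    · push_neg at hex
      refine ⟨[], by simp, by simp, by simp, ?_⟩
      intro v hv
      right
      simpa using hex v hv

/-! ### Double counting for the leftover vertices -/

lemma count_incident {V E : Type*} [DecidableEq V] [DecidableEq E] (W : V → Finset E)
    (T : Finset V) (U : Finset E) (D r : ℕ)
    (hD : ∀ x ∈ U, (T.filter (fun v => x ∈ W v)).card ≤ D)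
    (hr : ∀ v ∈ T, r ≤ ((W v) ∩ U).card) : T.card * r ≤ U.card * D := by
  calc T.card * r = ∑ _v ∈ T, r := by rw [Finset.sum_const, smul_eq_mul]
    _ ≤ ∑ v ∈ T, ((W v) ∩ U).card := Finset.sum_le_sum hr
    _ = ∑ v ∈ T, ∑ x ∈ U, (if x ∈ W v then 1 else 0) := by
        apply Finset.sum_congr rfl
        intro v _
        rw [← Finset.card_filter, Finset.filter_mem_eq_inter, Finset.inter_comm]
    _ = ∑ x ∈ U, ∑ v ∈ T, (if x ∈ W v then 1 else 0) := Finset.sum_comm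
    _ = ∑ x ∈ U, (T.filter (fun v => x ∈ W v)).card := by
        apply Finset.sum_congr rfl
        intro x _
        rw [Finset.card_filter]
    _ ≤ ∑ _x ∈ U, D := Finset.sum_le_sum hD
    _ = U.card * D := by rw [Finset.sum_const, smul_eq_mul]

/-! ### Numeric inequalities -/

lemma eps_pow_le (α ε : ℝ) (hα0 : 0 < α) (hα1 : α < 1) (hε0 : 0 < ε)
    (hεα : ε ≤ (8 : ℝ) ^ (-(8 / α ^ 2))) (d r m : ℕ)
    (hm : (α * d : ℝ) ≤ m) (hm2r : m ≤ 2 * r) :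
    ENNReal.ofReal ε ^ r ≤ ((2 : ENNReal) ^ (12 * d))⁻¹ := by
  have hα2 : 0 < α ^ 2 := by positivity
  have key : ε ^ r ≤ ((2 : ℝ) ^ (12 * d))⁻¹ := by
    have h1 : ε ^ r ≤ ((8 : ℝ) ^ (-(8 / α ^ 2))) ^ r := pow_le_pow_left₀ hε0.le hεα r
    have h2 : ((8 : ℝ) ^ (-(8 / α ^ 2))) ^ r = (8 : ℝ) ^ (-(8 / α ^ 2) * r) := by
      rw [← Real.rpow_natCast ((8 : ℝ) ^ (-(8 / α ^ 2))) r, ← Real.rpow_mul (by norm_num)]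
    have h3 : -(8 / α ^ 2) * r ≤ -(4 * d : ℝ) := by
      have hcast : (α : ℝ) * d ≤ 2 * r := by
        calc (α : ℝ) * d ≤ m := hm
          _ ≤ 2 * r := by exact_mod_cast hm2r
      have h4 : 4 * (d : ℝ) ≤ 8 / α ^ 2 * r := by
        rw [div_mul_eq_mul_div, le_div_iff₀ hα2]
        have hd0 : (0 : ℝ) ≤ d := Nat.cast_nonneg d
        nlinarith [mul_nonneg hd0 (Nat.cast_nonneg r : (0:ℝ) ≤ r)]
      linarith
    have h5 : (8 : ℝ) ^ (-(8 / α ^ 2) * r) ≤ (8 : ℝ) ^ (-(4 * d : ℝ)) :=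
      Real.rpow_le_rpow_of_exponent_le (by norm_num) h3
    have h6 : (8 : ℝ) ^ (-(4 * d : ℝ)) = ((2 : ℝ) ^ (12 * d))⁻¹ := by
      rw [Real.rpow_neg (by norm_num)]
      congr 1
      rw [show (4 * d : ℝ) = ((4 * d : ℕ) : ℝ) by push_cast; ring, Real.rpow_natCast]
      rw [show (8 : ℝ) = 2 ^ 3 by norm_num, ← pow_mul]
      congr 1
      ring
    calc ε ^ r ≤ _ := h1
      _ = _ := h2
      _ ≤ _ := h5
      _ = _ := h6
  calc ENNReal.ofReal ε ^ r = ENNReal.ofReal (ε ^ r) := (ENNReal.ofReal_pow hε0.le r).symm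
    _ ≤ ENNReal.ofReal (((2 : ℝ) ^ (12 * d))⁻¹) := ENNReal.ofReal_le_ofReal key
    _ = ((2 : ENNReal) ^ (12 * d))⁻¹ := by
        rw [ENNReal.ofReal_inv_of_pos (by positivity)]
        congr 1
        rw [ENNReal.ofReal_pow (by norm_num)]
        norm_num

lemma two_pow_mul_inv_le {a b c : ℕ} (h : a + c ≤ b) :
    (2 : ENNReal) ^ a * ((2 : ENNReal) ^ b)⁻¹ ≤ ((2 : ENNReal) ^ c)⁻¹ := by
  have h2 : (2 : ENNReal) ^ a ≠ 0 := by positivity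
  have h3 : (2 : ENNReal) ^ a ≠ ⊤ := ENNReal.pow_ne_top (by norm_num)
  have hb : b = a + (b - a) := by omega
  rw [hb, pow_add, ENNReal.mul_inv (Or.inl h2) (Or.inl h3), ← mul_assoc,
    ENNReal.mul_inv_cancel h2 h3, one_mul]
  exact ENNReal.inv_le_inv.mpr (pow_le_pow_right₀ one_le_two (by omega))

/-! ### Witness sets -/

def openNbrF (ω : (Vtx d → Bool) × (Sym2 (Vtx d) → Bool)) (v : Vtx d) : Finset (Vtx d) :=
  {u | hammingDist v u = 1 ∧ ω.1 u = true}

def openEdgF (ω : (Vtx d → Bool) × (Sym2 (Vtx d) → Bool)) (v : Vtx d) : Finset (Vtx d) :=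
  {u | hammingDist v u = 1 ∧ ω.2 s(v, u) = true}

def Wit (m : ℕ) (ω : (Vtx d → Bool) × (Sym2 (Vtx d) → Bool)) (v : Vtx d) : Finset (Elm d) :=
  if m ≤ (openNbrF ω v).card then (openNbrF ω v).image Sum.inl
  else (openEdgF ω v).image (fun u => Sum.inr s(v, u))

lemma Wit_subset (m : ℕ) (ω : (Vtx d → Bool) × (Sym2 (Vtx d) → Bool)) (v : Vtx d) :
    Wit m ω v ⊆ incX v := by
  rw [Wit]
  split
  · refine (Finset.image_subset_image ?_).trans Finset.subset_union_left
    intro u hu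
    simp only [openNbrF, Finset.mem_filter] at hu
    exact mem_nbrF.mpr hu.2.1
  · refine (Finset.image_subset_image ?_).trans Finset.subset_union_right
    intro u hu
    simp only [openEdgF, Finset.mem_filter] at hu
    exact mem_nbrF.mpr hu.2.1

lemma Wit_card (m : ℕ) (ω : (Vtx d → Bool) × (Sym2 (Vtx d) → Bool)) (v : Vtx d)
    (h : m ≤ (openNbrF ω v).card ∨ m ≤ (openEdgF ω v).card) : m ≤ (Wit m ω v).card := by
  rw [Wit]
  split
  · rename_i h1
    rwa [Finset.card_image_of_injective _ Sum.inl_injective]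
  · rename_i h1
    have h2 : m ≤ (openEdgF ω v).card := h.resolve_left h1
    rwa [Finset.card_image_of_injective]
    intro a b hab
    have : s(v, a) = s(v, b) := Sum.inr.inj hab
    exact Sym2.congr_right.mp this

lemma Wit_open_left (m : ℕ) (ω : (Vtx d → Bool) × (Sym2 (Vtx d) → Bool)) (v : Vtx d)
    {a : Vtx d} (h : Sum.inl a ∈ Wit m ω v) : ω.1 a = true := by
  rw [Wit] at h
  split at h
  · obtain ⟨u, hu, hue⟩ := Finset.mem_image.mp h
    cases hue
    simp only [openNbrF, Finset.mem_filter] at hu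
    exact hu.2.2
  · obtain ⟨u, hu, hue⟩ := Finset.mem_image.mp h
    cases hue

lemma Wit_open_right (m : ℕ) (ω : (Vtx d → Bool) × (Sym2 (Vtx d) → Bool)) (v : Vtx d)
    {e : Sym2 (Vtx d)} (h : Sum.inr e ∈ Wit m ω v) : ω.2 e = true := by
  rw [Wit] at h
  split at h
  · obtain ⟨u, hu, hue⟩ := Finset.mem_image.mp h
    cases hue
  · obtain ⟨u, hu, hue⟩ := Finset.mem_image.mp h
    have he : s(v, u) = e := Sum.inr.inj hue
    simp only [openEdgF, Finset.mem_filter] at hu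
    rw [← he]
    exact hu.2.2

end FDV

end FDVAux

/-- **Lemma (decent vertices).** Fix `α ∈ (0,1)` and `ε ∈ (0,1)` with `ε ≤ 8^{-8/α²}`.
For large `d` and every `s` with `d² ≤ s ≤ 2^d`, the probability that at least `s`
vertices of `Q^d` have at least `αd` neighbours in `V_ε` or are incident to at least
`αd` edges of `E_ε` is at most `2^{-s}`. -/
theorem few_decent_vertices (α ε : ℝ) (hα : α ∈ Set.Ioo (0 : ℝ) 1)
    (hε : ε ∈ Set.Ioo (0 : ℝ) 1) (hεα : ε ≤ (8 : ℝ) ^ (-(8 / α ^ 2))) :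
    ∃ d₀ : ℕ, ∀ d : ℕ, d₀ ≤ d → ∀ s : ℕ, d ^ 2 ≤ s → s ≤ 2 ^ d →
      mixedMeasure d ε ε
        {ω | s ≤ {v : Vtx d |
            α * d ≤ ({u | (cubeGraph d).Adj v u ∧ ω.1 u = true}.ncard : ℝ) ∨
            α * d ≤ ({u | (cubeGraph d).Adj v u ∧ ω.2 s(v, u) = true}.ncard : ℝ)}.ncard}
        ≤ (2 : ENNReal)⁻¹ ^ s := by
  classical
  obtain ⟨hα0, hα1⟩ := hα
  obtain ⟨hε0, hε1⟩ := hε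
  refine ⟨2, ?_⟩
  intro d hd2 s hs1 hs2
  set m : ℕ := Nat.ceil (α * d) with hmdef
  set r : ℕ := (m + 1) / 2 with hrdef
  set εE : ENNReal := ENNReal.ofReal ε with hεEdef
  have hd1 : 1 ≤ d := by omega
  have hm1 : 1 ≤ m := by
    have had : (0:ℝ) < α * d := by
      have : (0:ℝ) < d := by exact_mod_cast (by omega : 0 < d)
      positivity
    exact Nat.one_le_iff_ne_zero.mpr (by
      intro h
      rw [hmdef] at h
      exact absurd (Nat.ceil_eq_zero.mp h) (not_le.mpr had))
  have hm2r : m ≤ 2 * r := by omega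
  have hr2m : 2 * r ≤ m + 1 := by omega
  have hr1 : 1 ≤ r := by omega
  have hdd : d * d ≤ s := by rw [pow_two] at hs1; exact hs1
  have h2ds : 2 * d ≤ s := le_trans (Nat.mul_le_mul_right d (by omega)) hdd
  have hs4 : 4 ≤ s := le_trans (by nlinarith) hdd
  have hεE1 : εE ≤ 1 := ENNReal.ofReal_le_one.mpr hε1.le
  -- the key per-vertex probability bound
  have hεr : εE ^ r ≤ ((2 : ENNReal) ^ (12 * d))⁻¹ :=
    FDV.eps_pow_le α ε hα0 hα1 hε0 hεα d r m (Nat.le_ceil _) hm2r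
  -- the decent predicate as a Finset
  set dec : ((Vtx d → Bool) × (Sym2 (Vtx d) → Bool)) → Vtx d → Prop :=
    fun ω v => m ≤ (FDV.openNbrF ω v).card ∨ m ≤ (FDV.openEdgF ω v).card with hdecdef
  -- event inclusion into a union of certificate events
  set BigU : Set ((Vtx d → Bool) × (Sym2 (Vtx d) → Bool)) :=
    ⋃ k ∈ Finset.range (2 ^ d + 1),
      ⋃ c ∈ Finset.univ.filter (fun c : Fin k → FDV.CertOne d =>
        s ≤ k * (d + 2) ∧ k * r ≤ (FDV.unionList (List.ofFn fun i => (c i).1.2)).card),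
        {ω : (Vtx d → Bool) × (Sym2 (Vtx d) → Bool) |
          (∀ a ∈ (FDV.unionList (List.ofFn fun i => (c i).1.2)).toLeft, ω.1 a = true) ∧
          ∀ b ∈ (FDV.unionList (List.ofFn fun i => (c i).1.2)).toRight, ω.2 b = true}
    with hBigU
  have hsub : {ω : (Vtx d → Bool) × (Sym2 (Vtx d) → Bool) | s ≤ {v : Vtx d |
        α * d ≤ ({u | (cubeGraph d).Adj v u ∧ ω.1 u = true}.ncard : ℝ) ∨
        α * d ≤ ({u | (cubeGraph d).Adj v u ∧ ω.2 s(v, u) = true}.ncard : ℝ)}.ncard}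
      ⊆ BigU := by
    intro ω hω
    simp only [Set.mem_setOf_eq] at hω
    -- convert the decent set to a Finset
    have hNE : ∀ v : Vtx d, {u | (cubeGraph d).Adj v u ∧ ω.1 u = true}
        = ↑(FDV.openNbrF ω v) := by
      intro v
      ext u
      constructor
      · rintro ⟨h1, h2⟩
        exact Finset.mem_coe.mpr (Finset.mem_filter.mpr ⟨Finset.mem_univ _, h1, h2⟩)
      · intro h
        have := Finset.mem_filter.mp (Finset.mem_coe.mp h)
        exact ⟨this.2.1, this.2.2⟩
    have hED : ∀ v : Vtx d, {u | (cubeGraph d).Adj v u ∧ ω.2 s(v, u) = true}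
        = ↑(FDV.openEdgF ω v) := by
      intro v
      ext u
      constructor
      · rintro ⟨h1, h2⟩
        exact Finset.mem_coe.mpr (Finset.mem_filter.mpr ⟨Finset.mem_univ _, h1, h2⟩)
      · intro h
        have := Finset.mem_filter.mp (Finset.mem_coe.mp h)
        exact ⟨this.2.1, this.2.2⟩
    set S : Finset (Vtx d) := Finset.univ.filter (dec ω) with hSdef
    have hdecset : {v : Vtx d |
        α * d ≤ ({u | (cubeGraph d).Adj v u ∧ ω.1 u = true}.ncard : ℝ) ∨
        α * d ≤ ({u | (cubeGraph d).Adj v u ∧ ω.2 s(v, u) = true}.ncard : ℝ)} = ↑S := by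
      ext v
      simp only [Set.mem_setOf_eq, hSdef, Finset.coe_filter, Finset.mem_univ, true_and,
        hNE v, hED v, Set.ncard_coe_finset, hdecdef]
      rw [← Nat.ceil_le, ← Nat.ceil_le]
    rw [hdecset, Set.ncard_coe_finset] at hω
    -- greedy extraction
    obtain ⟨L, hmem, hpair, hlen, hleft⟩ := FDV.greedy (FDV.Wit m ω) r S ∅
    set k := L.length with hkdef
    have hsubW : ∀ p ∈ L, p.2 ⊆ FDV.Wit m ω p.1 := by
      intro p hp
      have := (hmem p hp).2.1
      rwa [Finset.sdiff_empty] at this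
    have hget : ∀ i : Fin k, L.get i ∈ L := fun i => List.get_mem L i
    set c : Fin k → FDV.CertOne d :=
      fun i => ⟨((L.get i).1, (L.get i).2),
        (hsubW _ (hget i)).trans (FDV.Wit_subset m ω _)⟩ with hcdef
    have hofn : (List.ofFn fun i => (c i).1.2) = L.map Prod.snd := by
      rw [show (fun i => (c i).1.2) = Prod.snd ∘ L.get from rfl, ← List.map_ofFn, List.ofFn_get]
    set G : Finset (FDV.Elm d) := FDV.unionList (List.ofFn fun i => (c i).1.2) with hGdef
    have hGeq : G = FDV.unionList (L.map Prod.snd) := by rw [hGdef, hofn]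
    have hGcard : G.card = k * r := by
      rw [hGeq, FDV.card_unionList (List.pairwise_map.mpr hpair), List.map_map]
      have hconst : L.map (Finset.card ∘ Prod.snd) = L.map (fun _ => r) :=
        List.map_congr_left fun p hp => (hmem p hp).2.2
      rw [hconst, List.map_const', List.sum_replicate, smul_eq_mul]
    -- bound on the number of picked vertices versus s
    have hks : s ≤ k * (d + 2) := by
      set T : Finset (Vtx d) := S.filter (fun v => ¬∃ p ∈ L, p.1 = v) with hTdef
      have hTbound : T.card * r ≤ (k * r) * (d + 1) := by
        have hcount := FDV.count_incident (FDV.Wit m ω) T G (d + 1) r ?_ ?_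
        · rwa [hGcard] at hcount
        · intro x hx
          refine le_trans (Finset.card_le_card ?_) (FDV.incid_le x)
          intro v hv
          have hWv := Finset.mem_filter.mp hv
          simp only [Finset.mem_filter, Finset.mem_univ, true_and]
          exact FDV.Wit_subset m ω v hWv.2
        · intro v hv
          have hv' := Finset.mem_filter.mp hv
          have hvS : v ∈ S := hv'.1
          have hnp : ¬∃ p ∈ L, p.1 = v := hv'.2
          have hlv := (hleft v hvS).resolve_left hnp
          rw [Finset.empty_union, ← hGeq] at hlv
          have hWm : m ≤ (FDV.Wit m ω v).card := by
            apply FDV.Wit_card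
            have := (Finset.mem_filter.mp hvS).2
            exact this
          have hsplit := Finset.card_inter_add_card_sdiff (FDV.Wit m ω v) G
          omega
      have hTcard : T.card ≤ k * (d + 1) := by
        have h1 : T.card * r ≤ (k * (d + 1)) * r := by
          calc T.card * r ≤ (k * r) * (d + 1) := hTbound
            _ = (k * (d + 1)) * r := by ring
        exact Nat.le_of_mul_le_mul_right h1 (by omega)
      have hpicked : (S.filter (fun v => ∃ p ∈ L, p.1 = v)).card ≤ k := by
        have hsub2 : S.filter (fun v => ∃ p ∈ L, p.1 = v) ⊆ L.toFinset.image Prod.fst := by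
          intro v hv
          obtain ⟨p, hp, hpv⟩ := (Finset.mem_filter.mp hv).2
          exact Finset.mem_image.mpr ⟨p, List.mem_toFinset.mpr hp, hpv⟩
        calc (S.filter (fun v => ∃ p ∈ L, p.1 = v)).card
            ≤ (L.toFinset.image Prod.fst).card := Finset.card_le_card hsub2
          _ ≤ L.toFinset.card := Finset.card_image_le
          _ ≤ k := L.toFinset_card_le
      have hSsplit := Finset.card_filter_add_card_filter_not
        (s := S) (p := fun v => ∃ p ∈ L, p.1 = v)
      have hT2 : (S.filter (fun a => ¬∃ p ∈ L, p.1 = a)).card = T.card := rfl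
      have hfin : k + k * (d + 1) = k * (d + 2) := by ring
      omega
    have hk2d : k ≤ 2 ^ d := by
      have h1 : S.card ≤ Fintype.card (Vtx d) := Finset.card_le_univ S
      have h2 : Fintype.card (Vtx d) = 2 ^ d := by
        rw [Fintype.card_fun]
        simp [ZMod.card]
      omega
    -- membership in the big union
    rw [hBigU]
    refine Set.mem_iUnion₂.mpr ⟨k, Finset.mem_range.mpr (by omega), ?_⟩
    refine Set.mem_iUnion₂.mpr ⟨c, ?_, ?_⟩
    · refine Finset.mem_filter.mpr ⟨Finset.mem_univ _, hks, ?_⟩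
      rw [← hGdef, hGcard]
    · rw [← hGdef]
      constructor
      · intro a ha
        have hin : Sum.inl a ∈ G := Finset.mem_toLeft.mp ha
        rw [hGeq, FDV.mem_unionList] at hin
        obtain ⟨F, hF, haF⟩ := hin
        obtain ⟨p, hp, rfl⟩ := List.mem_map.mp hF
        exact FDV.Wit_open_left m ω p.1 (hsubW p hp haF)
      · intro b hb
        have hin : Sum.inr b ∈ G := Finset.mem_toRight.mp hb
        rw [hGeq, FDV.mem_unionList] at hin
        obtain ⟨F, hF, hbF⟩ := hin
        obtain ⟨p, hp, rfl⟩ := List.mem_map.mp hF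
        exact FDV.Wit_open_right m ω p.1 (hsubW p hp hbF)
  -- measure computation
  refine le_trans (measure_mono hsub) ?_
  refine le_trans (measure_biUnion_finset_le _ _) ?_
  have hinner : ∀ k ∈ Finset.range (2 ^ d + 1),
      mixedMeasure d ε ε (⋃ c ∈ Finset.univ.filter (fun c : Fin k → FDV.CertOne d =>
        s ≤ k * (d + 2) ∧ k * r ≤ (FDV.unionList (List.ofFn fun i => (c i).1.2)).card),
        {ω : (Vtx d → Bool) × (Sym2 (Vtx d) → Bool) |
          (∀ a ∈ (FDV.unionList (List.ofFn fun i => (c i).1.2)).toLeft, ω.1 a = true) ∧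
          ∀ b ∈ (FDV.unionList (List.ofFn fun i => (c i).1.2)).toRight, ω.2 b = true})
      ≤ ((2 : ENNReal) ^ (s + 2 * d))⁻¹ := by
    intro k _
    refine le_trans (measure_biUnion_finset_le _ _) ?_
    set Fk := Finset.univ.filter (fun c : Fin k → FDV.CertOne d =>
      s ≤ k * (d + 2) ∧ k * r ≤ (FDV.unionList (List.ofFn fun i => (c i).1.2)).card) with hFk
    by_cases hne : Fk.Nonempty
    · obtain ⟨c₀, hc₀⟩ := hne
      have hsk : s ≤ k * (d + 2) := ((Finset.mem_filter.mp hc₀).2).1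
      have hk1 : 1 ≤ k := by
        rcases Nat.eq_zero_or_pos k with h | h
        · subst h; simp at hsk; omega
        · exact h
      have hterm : ∀ c ∈ Fk, mixedMeasure d ε ε
          {ω : (Vtx d → Bool) × (Sym2 (Vtx d) → Bool) |
            (∀ a ∈ (FDV.unionList (List.ofFn fun i => (c i).1.2)).toLeft, ω.1 a = true) ∧
            ∀ b ∈ (FDV.unionList (List.ofFn fun i => (c i).1.2)).toRight, ω.2 b = true}
          ≤ εE ^ (k * r) := by
        intro c hc
        have hkr : k * r ≤ (FDV.unionList (List.ofFn fun i => (c i).1.2)).card :=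
          ((Finset.mem_filter.mp hc).2).2
        have hμ := FDV.mixed_all_true d ε hε0.le hε1.le
          (FDV.unionList (List.ofFn fun i => (c i).1.2)).toLeft
          (FDV.unionList (List.ofFn fun i => (c i).1.2)).toRight
        rw [Finset.card_toLeft_add_card_toRight] at hμ
        rw [hμ]
        exact pow_le_pow_of_le_one (by simp) hεE1 hkr
      refine le_trans (Finset.sum_le_sum hterm) ?_
      rw [Finset.sum_const, nsmul_eq_mul]
      have hcard : (Fk.card : ENNReal) ≤ (2 : ENNReal) ^ ((3 * d + 2) * k) := by
        have h1 : Fk.card ≤ Fintype.card (Fin k → FDV.CertOne d) := by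
          rw [← Finset.card_univ]
          exact Finset.card_le_card (Finset.filter_subset _ _)
        have h2 : Fintype.card (Fin k → FDV.CertOne d)
            = Fintype.card (FDV.CertOne d) ^ k := by
          rw [Fintype.card_fun, Fintype.card_fin]
        have h3 : Fintype.card (FDV.CertOne d) ^ k ≤ (2 ^ d * 2 ^ (2 * d + 2)) ^ k :=
          Nat.pow_le_pow_left FDV.certOne_card k
        have h4 : (2 ^ d * 2 ^ (2 * d + 2) : ℕ) ^ k = 2 ^ ((3 * d + 2) * k) := by
          rw [← pow_add, ← pow_mul]
          congr 1
          ring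
        have h5 : Fk.card ≤ 2 ^ ((3 * d + 2) * k) := by omega
        calc (Fk.card : ENNReal) ≤ ((2 ^ ((3 * d + 2) * k) : ℕ) : ENNReal) := by
              exact_mod_cast h5
          _ = (2 : ENNReal) ^ ((3 * d + 2) * k) := by push_cast; ring
      have hpow : εE ^ (k * r) ≤ ((2 : ENNReal) ^ (12 * d * k))⁻¹ := by
        calc εE ^ (k * r) = (εE ^ r) ^ k := by rw [← pow_mul, Nat.mul_comm]
          _ ≤ (((2 : ENNReal) ^ (12 * d))⁻¹) ^ k := pow_le_pow_left' hεr k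
          _ = ((2 : ENNReal) ^ (12 * d * k))⁻¹ := by rw [← ENNReal.inv_pow, ← pow_mul]
      calc (Fk.card : ENNReal) * εE ^ (k * r)
          ≤ (2 : ENNReal) ^ ((3 * d + 2) * k) * ((2 : ENNReal) ^ (12 * d * k))⁻¹ :=
            mul_le_mul' hcard hpow
        _ ≤ ((2 : ENNReal) ^ (s + 2 * d))⁻¹ := by
            apply FDV.two_pow_mul_inv_le
            have e1 : s ≤ 2 * (d * k) := by
              calc s ≤ k * (d + 2) := hsk
                _ ≤ k * (2 * d) := Nat.mul_le_mul_left k (by omega)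
                _ = 2 * (d * k) := by ring
            have e2 : 2 * d ≤ 2 * (d * k) := by
              have : d ≤ d * k := Nat.le_mul_of_pos_right d (by omega)
              omega
            have e3 : (3 * d + 2) * k = 3 * (d * k) + 2 * k := by ring
            have e4 : 12 * d * k = 12 * (d * k) := by ring
            have e5 : k ≤ d * k := Nat.le_mul_of_pos_left k (by omega)
            omega
    · rw [Finset.not_nonempty_iff_eq_empty] at hne
      rw [hne, Finset.sum_empty]
      positivity
  refine le_trans (Finset.sum_le_sum hinner) ?_
  rw [Finset.sum_const, Finset.card_range, nsmul_eq_mul]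
  have hcast : ((2 ^ d + 1 : ℕ) : ENNReal) ≤ (2 : ENNReal) ^ (d + 1) := by
    push_cast
    have h1 : (1 : ENNReal) ≤ 2 ^ d := one_le_pow_of_one_le' (by norm_num : (1:ENNReal) ≤ 2) d
    calc (2 : ENNReal) ^ d + 1 ≤ 2 ^ d + 2 ^ d := by exact add_le_add le_rfl h1
      _ = 2 ^ (d + 1) := by rw [pow_succ, mul_two]
  calc ((2 ^ d + 1 : ℕ) : ENNReal) * ((2 : ENNReal) ^ (s + 2 * d))⁻¹
      ≤ (2 : ENNReal) ^ (d + 1) * ((2 : ENNReal) ^ (s + 2 * d))⁻¹ :=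
        mul_le_mul_left hcast _
    _ ≤ ((2 : ENNReal) ^ s)⁻¹ := FDV.two_pow_mul_inv_le (by omega)
    _ = (2 : ENNReal)⁻¹ ^ s := by rw [ENNReal.inv_pow]
end

section
/- Let k, m ≥ 1 be integers with km ≤ d and let H ∈ Q_{k,m}. Then for every edge uv of H, the set V(Q^d[u,v]) ∖ {u,v} is disjoint from V(H); moreover, for any two distinct edges uv and xy of H, the sets V(Q^d[u,v]) ∖ {u,v} and V(Q^d[x,y]) ∖ {x,y} are disjoint. -/
open MeasureTheory

private lemma z2 : ∀ a : ZMod 2, a + a = 0 := by decide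

private lemma vadd_self {d : ℕ} (x : Vtx d) : x + x = 0 := funext fun i => z2 _

private lemma vadd_cancel {d : ℕ} {x y c : Vtx d} (h : x + y = c) : y = x + c := by
  rw [← h, ← add_assoc, vadd_self, zero_add]

private lemma sum_indic_apply {d : ℕ} {D I : Finset (Finset (Fin d))}
    (hID : I ⊆ D) (hdisj : ∀ e ∈ D, ∀ f ∈ D, e ≠ f → Disjoint e f) (i : Fin d) :
    (∑ g ∈ I, indic g) i = if ∃ g ∈ I, i ∈ g then 1 else 0 := by
  rw [Finset.sum_apply]
  by_cases h : ∃ g ∈ I, i ∈ g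
  · obtain ⟨g₀, hg₀, hi⟩ := h
    rw [if_pos ⟨g₀, hg₀, hi⟩, Finset.sum_eq_single_of_mem g₀ hg₀]
    · simp [indic, hi]
    · intro g hg hne
      have hig : i ∉ g := fun hig =>
        (Finset.disjoint_left.mp (hdisj g (hID hg) g₀ (hID hg₀) hne) hig) hi
      simp [indic, hig]
  · rw [if_neg h]
    refine Finset.sum_eq_zero fun g hg => ?_
    have hig : i ∉ g := fun hig => h ⟨g, hg, hig⟩
    simp [indic, hig]

private lemma QV_add {d : ℕ} {D : Finset (Finset (Fin d))} {v₀ u x : Vtx d}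
    (hu : u ∈ QV D v₀) (hx : x ∈ QV D v₀) :
    ∃ J ⊆ D, u + x = ∑ g ∈ J, indic g := by
  obtain ⟨I, hI, rfl⟩ := hu
  obtain ⟨K, hK, rfl⟩ := hx
  refine ⟨(I \ K) ∪ (K \ I),
    Finset.union_subset (Finset.sdiff_subset.trans hI) (Finset.sdiff_subset.trans hK), ?_⟩
  have hdis : Disjoint (I \ K) (K \ I) := by
    rw [Finset.disjoint_left]
    intro a ha hb
    exact (Finset.mem_sdiff.mp hb).2 (Finset.mem_sdiff.mp ha).1
  rw [Finset.sum_union hdis]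
  have hI' : (∑ g ∈ I, indic g : Vtx d)
      = ∑ g ∈ I \ K, indic g + ∑ g ∈ I ∩ K, indic g := by
    rw [← Finset.sum_union (Finset.disjoint_sdiff_inter I K), Finset.sdiff_union_inter]
  have hK' : (∑ g ∈ K, indic g : Vtx d)
      = ∑ g ∈ K \ I, indic g + ∑ g ∈ I ∩ K, indic g := by
    rw [Finset.inter_comm, ← Finset.sum_union (Finset.disjoint_sdiff_inter K I),
      Finset.sdiff_union_inter]
  rw [hI', hK']
  have h1 := vadd_self v₀
  have h2 := vadd_self (∑ g ∈ I ∩ K, indic g : Vtx d)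
  linear_combination h1 + h2

private lemma subset_pair {d k : ℕ} (hk : 1 ≤ k) {D J : Finset (Finset (Fin d))}
    (hJD : J ⊆ D) (hsize : ∀ e ∈ D, e.card = k)
    (hdisj : ∀ e ∈ D, ∀ f ∈ D, e ≠ f → Disjoint e f)
    {e f : Finset (Fin d)} (he : e ∈ D) (hf : f ∈ D)
    (hsupp : ∀ i : Fin d, i ∉ e → i ∉ f → (∑ g ∈ J, indic g) i = 0) :
    J ⊆ {e, f} := by
  intro g hg
  by_contra hgef
  simp only [Finset.mem_insert, Finset.mem_singleton, not_or] at hgef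
  obtain ⟨hge, hgf⟩ := hgef
  obtain ⟨i, hig⟩ : g.Nonempty := Finset.card_pos.mp (by rw [hsize g (hJD hg)]; omega)
  have hie : i ∉ e := fun hie =>
    (Finset.disjoint_left.mp (hdisj g (hJD hg) e he hge) hig) hie
  have hif : i ∉ f := fun hif =>
    (Finset.disjoint_left.mp (hdisj g (hJD hg) f hf hgf) hig) hif
  have h0 := hsupp i hie hif
  rw [sum_indic_apply hJD hdisj, if_pos ⟨g, hg, hig⟩] at h0
  exact one_ne_zero h0

private lemma subcube_supp {d : ℕ} {u v z : Vtx d} {e : Finset (Fin d)}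
    (hev : u + v = indic e) (hz : z ∈ subcube u v) :
    ∀ i, i ∉ e → (u + z) i = 0 := by
  intro i hie
  have h0 : u i + v i = 0 := by
    have := congrFun hev i
    simpa [indic, hie] using this
  have h1 : u i = v i := by linear_combination h0 - z2 (v i)
  have h2 : z i = u i := hz i h1
  show u i + z i = 0
  rw [h2]; exact z2 _

/-- **Lemma (disjointness of the small subcubes).** For `H = Q(D,v₀) ∈ Q_{k,m}`:
the interior of the subcube `Q^d[u,v]` of any edge `uv` of `H` avoids `V(H)`, and the
interiors of the subcubes of distinct edges of `H` are pairwise disjoint. -/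
theorem edge_subcubes_disjoint (d k m : ℕ) (hk : 1 ≤ k) (hm : 1 ≤ m) (hkm : k * m ≤ d)
    (D : Finset (Finset (Fin d))) (hD : D ∈ Dfam d k m) (v₀ : Vtx d) :
    (∀ u v : Vtx d, QAdj D v₀ u v →
      (subcube u v \ {u, v}) ∩ QV D v₀ = ∅) ∧
    (∀ u v x y : Vtx d, QAdj D v₀ u v → QAdj D v₀ x y → s(u, v) ≠ s(x, y) →
      (subcube u v \ {u, v}) ∩ (subcube x y \ {x, y}) = ∅) := by
  obtain ⟨hcard, hsize, hdisj⟩ := hD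
  constructor
  · rintro u v ⟨hu, hv, e, he, hev⟩
    ext z
    simp only [Set.mem_inter_iff, Set.mem_empty_iff_false, iff_false, Set.mem_diff,
      Set.mem_insert_iff, Set.mem_singleton_iff, not_or]
    rintro ⟨⟨hz1, hzu, hzv⟩, hz3⟩
    obtain ⟨J, hJD, hJ⟩ := QV_add hu hz3
    have ha := subcube_supp hev hz1
    have hsupp : ∀ i, i ∉ e → i ∉ e → (∑ g ∈ J, indic g) i = 0 := fun i hie _ => by
      rw [← hJ]; exact ha i hie
    have hJe : J ⊆ {e} := by
      have := subset_pair hk hJD hsize hdisj he he hsupp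
      simpa using this
    rcases Finset.subset_singleton_iff.mp hJe with h | h
    · apply hzu
      rw [h, Finset.sum_empty] at hJ
      rw [vadd_cancel hJ, add_zero]
    · apply hzv
      rw [h, Finset.sum_singleton] at hJ
      rw [vadd_cancel hJ, ← vadd_cancel hev]
  · rintro u v x y ⟨hu, hv, e, he, hev⟩ ⟨hx, hy, f, hf, hxyf⟩ hne
    ext z
    simp only [Set.mem_inter_iff, Set.mem_empty_iff_false, iff_false, Set.mem_diff,
      Set.mem_insert_iff, Set.mem_singleton_iff, not_or]
    rintro ⟨⟨hz1, hzu, hzv⟩, ⟨hz3, hzx, hzy⟩⟩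
    obtain ⟨J, hJD, hJ⟩ := QV_add hu hx
    have ha := subcube_supp hev hz1
    have hb := subcube_supp hxyf hz3
    have hsum : ∀ i, (u + x) i = (u + z) i + (x + z) i := fun i => by
      show u i + x i = (u i + z i) + (x i + z i)
      linear_combination - z2 (z i)
    have hsupp : ∀ i, i ∉ e → i ∉ f → (∑ g ∈ J, indic g) i = 0 := by
      intro i hie hif
      rw [← hJ, hsum i, ha i hie, hb i hif, add_zero]
    by_cases hef : e = f
    · subst hef
      have hJe : J ⊆ {e} := by
        have := subset_pair hk hJD hsize hdisj he he (fun i h _ => hsupp i h h)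
        simpa using this
      rcases Finset.subset_singleton_iff.mp hJe with h | h
      · rw [h, Finset.sum_empty] at hJ
        have hxu : x = u := by rw [vadd_cancel hJ, add_zero]
        have hyv : y = v := by
          rw [vadd_cancel hxyf, hxu, ← vadd_cancel hev]
        exact hne (by rw [hxu, hyv])
      · rw [h, Finset.sum_singleton] at hJ
        have hxv : x = v := by rw [vadd_cancel hJ, ← vadd_cancel hev]
        have hyu : y = u := by
          rw [vadd_cancel hxyf, hxv, vadd_cancel hev]
          have := vadd_self (indic e : Vtx d)
          linear_combination this
        exact hne (by rw [hxv, hyu, Sym2.eq_swap])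
    · have hdisjef := hdisj e he f hf hef
      have hJef : J ⊆ {e, f} := subset_pair hk hJD hsize hdisj he hf hsupp
      by_cases heJ : e ∈ J
      · apply hzv
        have huz : u + z = indic e := by
          funext i
          by_cases hie : i ∈ e
          · have hif : i ∉ f := fun hif =>
              (Finset.disjoint_left.mp hdisjef hie) hif
            have hxz : (x + z) i = 0 := hb i hif
            have hux : (u + x) i = 1 := by
              rw [hJ, sum_indic_apply hJD hdisj, if_pos ⟨e, heJ, hie⟩]
            have := hsum i
            rw [hux, hxz, add_zero] at this
            show (u + z) i = indic e i
            rw [← this]; simp [indic, hie]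
          · show (u + z) i = indic e i
            rw [ha i hie]; simp [indic, hie]
        rw [vadd_cancel huz, ← vadd_cancel hev]
      · apply hzu
        have huz : u + z = 0 := by
          funext i
          by_cases hie : i ∈ e
          · have hif : i ∉ f := fun hif =>
              (Finset.disjoint_left.mp hdisjef hie) hif
            have hxz : (x + z) i = 0 := hb i hif
            have hux : (u + x) i = 0 := by
              rw [hJ, sum_indic_apply hJD hdisj, if_neg]
              rintro ⟨g, hgJ, hig⟩
              rcases Finset.mem_insert.mp (hJef hgJ) with rfl | hg
              · exact heJ hgJ
              · exact hif (Finset.mem_singleton.mp hg ▸ hig)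
            have := hsum i
            rw [hux, hxz, add_zero] at this
            show (u + z) i = (0 : Vtx d) i
            rw [← this]; rfl
          · show (u + z) i = (0 : Vtx d) i
            rw [ha i hie]; rfl
        rw [vadd_cancel huz, add_zero]
end

section
/- Let k ≥ 3 be an odd integer and let d ≥ 2k. Then for any two vertices u, v ∈ {0,1}^d at Hamming distance 1, there exist w₁, w₂ ∈ {0,1}^d such that the Hamming distances between v and w₁, between w₁ and w₂, and between w₂ and u are all exactly k; that is, u and v are joined by a path of length 3 in Q^d(k). -/
open MeasureTheory

lemma zmod2_eq_add_one : ∀ a b : ZMod 2, a ≠ b → b = a + 1 := by decide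

lemma indic_add {d : ℕ} (e f : Finset (Fin d)) : indic e + indic f = indic (symmDiff e f) := by
  funext i
  simp only [indic, Pi.add_apply, Finset.mem_symmDiff]
  by_cases he : i ∈ e <;> by_cases hf : i ∈ f <;> simp [he, hf] <;> decide

lemma hammingDist_add_indic {d : ℕ} (x : Vtx d) (e : Finset (Fin d)) :
    hammingDist x (x + indic e) = e.card := by
  unfold hammingDist
  congr 1
  ext i
  simp only [Finset.mem_filter, Finset.mem_univ, true_and, Pi.add_apply, indic]
  by_cases h : i ∈ e <;> simp [h] <;> decide

lemma eq_add_indic {d : ℕ} (u v : Vtx d) :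
    v = u + indic (Finset.univ.filter fun i => u i ≠ v i) := by
  funext i
  simp only [indic, Pi.add_apply, Finset.mem_filter, Finset.mem_univ, true_and]
  by_cases h : u i = v i
  · simp [h]
  · rw [if_pos h]
    exact zmod2_eq_add_one _ _ h

/-- **Lemma (adjacent vertices are joined by a path of length 3 in `Q^d(k)`).**
For odd `k ≥ 3` and `d ≥ 2k`, any two vertices at Hamming distance 1 are joined by a
path of length 3 in the distance-`k` graph `Q^d(k)`. -/
theorem path_of_length_three (k d : ℕ) (hk3 : 3 ≤ k) (hkodd : Odd k) (hd : 2 * k ≤ d)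
    (u v : Vtx d) (huv : hammingDist u v = 1) :
    ∃ w₁ w₂ : Vtx d,
      hammingDist v w₁ = k ∧ hammingDist w₁ w₂ = k ∧ hammingDist w₂ u = k := by
  obtain ⟨a, ha⟩ := hkodd
  -- the set of differing coordinates
  set D : Finset (Fin d) := Finset.univ.filter (fun i => v i ≠ u i) with hD
  have hucard : D.card = 1 := by
    rw [hD]
    have := huv
    unfold hammingDist at this
    rw [← this]
    congr 1
    ext i
    simp [ne_comm]
  obtain ⟨i₀, hi₀⟩ := Finset.card_eq_one.mp hucard
  have hu : u = v + indic D := eq_add_indic v u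
  have hdle : d = Finset.univ.card (α := Fin d) := by simp
  -- choose A ⊆ univ \ {i₀} of size k - 1
  have h1 : k - 1 ≤ (Finset.univ \ {i₀} : Finset (Fin d)).card := by
    rw [Finset.card_sdiff_of_subset (by simp)]
    simp only [Finset.card_singleton, Finset.card_univ, Fintype.card_fin]
    omega
  obtain ⟨A, hA_sub, hA_card⟩ := Finset.exists_subset_card_eq h1
  have hi₀A : i₀ ∉ A := fun h => by simpa using hA_sub h
  -- choose B ⊆ A of size a
  have h2 : a ≤ A.card := by omega
  obtain ⟨B, hB_sub, hB_card⟩ := Finset.exists_subset_card_eq h2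
  -- choose F ⊆ univ \ insert i₀ A of size a + 1
  have h3 : a + 1 ≤ (Finset.univ \ insert i₀ A : Finset (Fin d)).card := by
    rw [Finset.card_sdiff_of_subset (by simp)]
    rw [Finset.card_insert_of_notMem hi₀A]
    simp only [Finset.card_univ, Fintype.card_fin]
    omega
  obtain ⟨F, hF_sub, hF_card⟩ := Finset.exists_subset_card_eq h3
  have hFA : Disjoint F A := by
    refine Finset.disjoint_left.mpr fun x hx hxA => ?_
    have := hF_sub hx
    simp [Finset.mem_insert] at this
    exact this.2 hxA
  have hFi₀ : i₀ ∉ F := fun h => by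
    have := hF_sub h; simp at this
  set S₁ : Finset (Fin d) := insert i₀ A with hS₁
  set S₂ : Finset (Fin d) := B ∪ F with hS₂
  refine ⟨v + indic S₁, v + indic S₁ + indic S₂, ?_, ?_, ?_⟩
  · rw [hammingDist_add_indic]
    rw [Finset.card_insert_of_notMem hi₀A, hA_card]
    omega
  · have hBF : Disjoint B F := (hFA.mono_right hB_sub).symm
    rw [hammingDist_add_indic, Finset.card_union_of_disjoint hBF, hB_card, hF_card]
    omega
  · have hxx : indic D + indic D = (0 : Vtx d) := by
      funext i
      change indic D i + indic D i = 0
      generalize indic D i = b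
      revert b; decide
    have hveq : v + indic S₁ + indic S₂ = u + indic (symmDiff (symmDiff D S₁) S₂) := by
      rw [hu, ← indic_add, ← indic_add]
      rw [show v + indic D + (indic D + indic S₁ + indic S₂)
            = v + (indic D + indic D) + indic S₁ + indic S₂ by ring, hxx]
      ring
    have hFA' : ∀ x ∈ F, x ∉ A := fun x hx => Finset.disjoint_left.mp hFA hx
    have hT : symmDiff (symmDiff D S₁) S₂ = (A \ B) ∪ F := by
      rw [hi₀, hS₁, hS₂]
      ext x
      simp only [Finset.mem_symmDiff, Finset.mem_insert, Finset.mem_singleton,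
        Finset.mem_union, Finset.mem_sdiff]
      by_cases hx0 : x = i₀ <;> by_cases hxA : x ∈ A <;> by_cases hxB : x ∈ B <;>
        by_cases hxF : x ∈ F
      all_goals
        first
        | (exfalso; subst hx0; exact hi₀A hxA)
        | (exfalso; subst hx0; exact hFi₀ hxF)
        | (exfalso; exact hxA (hB_sub hxB))
        | (exfalso; exact hFA' x hxF hxA)
        | tauto
    have hdisj : Disjoint (A \ B) F := (hFA.mono_right Finset.sdiff_subset).symm
    rw [hveq, hammingDist_comm, hammingDist_add_indic, hT,
        Finset.card_union_of_disjoint hdisj, Finset.card_sdiff_of_subset hB_sub, hA_card, hB_card, hF_card]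
    omega
end
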